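/- Let (M, J, g) be a metallic pseudo-Riemannian manifold and ∇ a torsion-free connection. Then the Tachibana operator satisfies (Φ_J g)(X,Y,Z) = C(Y,Z,JX) − Γ(Y,Z,X) + g((∇_Y J)X, Z) + g((∇_Z J)X, Y), where C = ∇g, Γ = ∇G, G(X,Y) = g(JX,Y). -/

import Mathlib

/-! Torsion-freeness turns each Lie derivative `(L_Y J) X` in `Φ_J g` into
`(∇_Y J) X - ∇_{JX} Y + J ∇_X Y`. The `∇_{JX}` terms combine with `(JX) g(Y,Z)` into
`C(Y,Z,JX)`, and the `J ∇_X` terms, once `J` is moved across `g`, combine with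
`X g(JY,Z)` into `Γ(Y,Z,X)`. -/

variable {A : Type*} [CommRing A] [Algebra ℝ A]
variable {V : Type*} [AddCommGroup V] [Module ℝ V] [Module A V] [IsScalarTower ℝ A V]

/-- Covariant derivative `(D_X T) Y` of a (1,1)-tensor field `T`. -/
def covT (D : V → V → V) (T : V → V) (X Y : V) : V := D X (T Y) - T (D X Y)

/-- `covM Dact D h X Y Z = (D_Z h)(X,Y)`, the covariant derivative of a
(0,2)-tensor field `h`, where `Dact` is the action of vector fields on functions. -/
def covM (Dact : V → A → A) (D : V → V → V) (h : V → V → A) (X Y Z : V) : A :=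
  Dact Z (h X Y) - h (D Z X) Y - h X (D Z Y)

/-- Tachibana operator (Φ_T g)(X,Y,Z) applied to the metric g, where
(L_X T)Y = [X,TY] − T[X,Y]. -/
def tachi (Dact : V → A → A) (bracket : V → V → V) (g : V → V → A)
    (T : V → V) (X Y Z : V) : A :=
  Dact (T X) (g Y Z) - Dact X (g (T Y) Z)
    + g (bracket Y (T X) - T (bracket Y X)) Z
    + g Y (bracket Z (T X) - T (bracket Z X))

omit [Module ℝ V] in
theorem bracket_sub_map_bracket_of_torsionFree {F : Type*} [FunLike F V V]
    [AddMonoidHomClass F V V] (bracket D : V → V → V)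
    (htf : ∀ X Y, D X Y - D Y X = bracket X Y) (T : F) (X Y : V) :
    bracket Y (T X) - T (bracket Y X) = covT D T Y X - D (T X) Y + T (D X Y) := by
  rw [← htf, ← htf, map_sub, covT]
  abel

theorem tachibana_formula_general
    (Dact : V → A → A) (bracket D : V → V → V)
    (g : V →ₗ[A] V →ₗ[A] A) (J : V →ₗ[A] V)
    (hsym : ∀ X Y, g X Y = g Y X)
    (hJsym : ∀ X Y, g (J X) Y = g X (J Y))
    (htf : ∀ X Y, D X Y - D Y X = bracket X Y) :
    ∀ X Y Z, tachi Dact bracket (fun a b => g a b) (⇑J) X Y Z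
      = covM Dact D (fun a b => g a b) Y Z (J X)
        - covM Dact D (fun a b => g (J a) b) Y Z X
        + g (covT D (⇑J) Y X) Z + g (covT D (⇑J) Z X) Y := by
  intro X Y Z
  simp only [tachi, covM, bracket_sub_map_bracket_of_torsionFree bracket D htf, map_add,
    map_sub, LinearMap.add_apply, LinearMap.sub_apply, hsym Y, hJsym]
  ring

/-- for a torsion-free connection ∇,
(Φ_J g)(X,Y,Z) = C(Y,Z,JX) − Γ(Y,Z,X) + g((∇_Y J)X, Z) + g((∇_Z J)X, Y). -/
theorem tachibana_formula
    (Dact : V → A → A) (bracket D : V → V → V)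
    (g : V →ₗ[A] V →ₗ[A] A) (J : V →ₗ[A] V) (p q : ℝ)
    (hsym : ∀ X Y, g X Y = g Y X)
    (hJsym : ∀ X Y, g (J X) Y = g X (J Y))
    (hJ2 : ∀ X, J (J X) = p • J X + q • X)
    (htf : ∀ X Y, D X Y - D Y X = bracket X Y) :
    ∀ X Y Z, tachi Dact bracket (fun a b => g a b) (⇑J) X Y Z
      = covM Dact D (fun a b => g a b) Y Z (J X)
        - covM Dact D (fun a b => g (J a) b) Y Z X
        + g (covT D (⇑J) Y X) Z + g (covT D (⇑J) Z X) Y :=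
  tachibana_formula_general Dact bracket D g J hsym hJsym htf
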